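/- arXiv:1603.04380 — 4 statements merged into one kernel-verified Lean document; each statement's English description precedes it below -/
import Mathlib

section
/- For any ε-assignment φ from a finite set U to a finite set V, let U♯ = {u ∈ U : φ(u) ⊆ V} and V♯ = {v ∈ V : φ⁻¹[v] ⊆ U}. Then the map φ̃ : U♯ → V♯ defined by φ̃(u) = v where {v} = φ(u) is well defined and bijective. -/
/-- An ε-assignment from `U` to `V`: a map `φ : U_ε → 𝒫(V_ε)` (with `ε` modelled by
`none`) such that `|φ(u)| = 1` for every `u ∈ U`, `|φ⁻¹[v]| = 1` for every `v ∈ V`,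
and `ε ∈ φ(ε)`. -/
def IsEpsAssignment {U V : Type*} [Fintype U] [DecidableEq U] [DecidableEq V]
    (φ : Option U → Finset (Option V)) : Prop :=
  (∀ u : U, (φ (some u)).card = 1) ∧
  (∀ v : V, (Finset.univ.filter (fun x : Option U => some v ∈ φ x)).card = 1) ∧
  none ∈ φ none

/-- for any ε-assignment `φ`, with `U♯ = {u ∈ U : φ(u) ⊆ V}` and
`V♯ = {v ∈ V : φ⁻¹[v] ⊆ U}`, the map `φ̃ : U♯ → V♯`, `φ̃(u) = v` where `{v} = φ(u)`,
is well defined and bijective. -/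
theorem epsAssignment_bijective_restriction
    {U V : Type*} [Fintype U] [DecidableEq U] [Fintype V] [DecidableEq V]
    (φ : Option U → Finset (Option V)) (hφ : IsEpsAssignment φ) :
    ∃ f : {u : U // φ (some u) ⊆ Finset.univ.image (fun v : V => (some v : Option V))} →
          {v : V // Finset.univ.filter (fun x : Option U => some v ∈ φ x) ⊆
              Finset.univ.image (fun u : U => (some u : Option U))},
      (∀ u, φ (some u.val) = {some (f u).val}) ∧ Function.Bijective f := by
  classical
  obtain ⟨h1, h2, -⟩ := hφ
  have key : ∀ u : {u : U // φ (some u) ⊆ Finset.univ.image (fun v : V => (some v : Option V))},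
      ∃ v : V, φ (some u.val) = {some v} := by
    rintro ⟨u, hu⟩
    obtain ⟨a, ha⟩ := Finset.card_eq_one.mp (h1 u)
    have : a ∈ Finset.univ.image (fun v : V => (some v : Option V)) := hu (by simp [ha])
    obtain ⟨v, -, rfl⟩ := Finset.mem_image.mp this
    exact ⟨v, ha⟩
  choose g hg using key
  have hgmem : ∀ u, Finset.univ.filter (fun x : Option U => some (g u) ∈ φ x) ⊆
      Finset.univ.image (fun w : U => (some w : Option U)) := by
    intro u x hx
    have hmem : (some u.val : Option U) ∈
        Finset.univ.filter (fun x : Option U => some (g u) ∈ φ x) := by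
      simp [hg u]
    obtain ⟨a, ha⟩ := Finset.card_eq_one.mp (h2 (g u))
    rw [ha, Finset.mem_singleton] at hx hmem
    subst hx
    rw [← hmem]
    simp
  refine ⟨fun u => ⟨g u, hgmem u⟩, fun u => hg u, ?_, ?_⟩
  · intro u1 u2 h
    have hgv : g u1 = g u2 := congrArg Subtype.val h
    have e1 : (some u1.val : Option U) ∈
        Finset.univ.filter (fun x : Option U => some (g u1) ∈ φ x) := by simp [hg u1]
    have e2 : (some u2.val : Option U) ∈
        Finset.univ.filter (fun x : Option U => some (g u1) ∈ φ x) := by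
      simp [hgv, hg u2]
    obtain ⟨a, ha⟩ := Finset.card_eq_one.mp (h2 (g u1))
    rw [ha, Finset.mem_singleton] at e1 e2
    apply Subtype.ext
    have := e1.trans e2.symm
    exact Option.some_injective _ this
  · rintro ⟨v, hv⟩
    obtain ⟨a, ha⟩ := Finset.card_eq_one.mp (h2 v)
    have haf : a ∈ Finset.univ.filter (fun x : Option U => some v ∈ φ x) := by
      simp [ha]
    have : a ∈ Finset.univ.image (fun w : U => (some w : Option U)) := hv haf
    obtain ⟨u, -, rfl⟩ := Finset.mem_image.mp this
    have hvu : some v ∈ φ (some u) := (Finset.mem_filter.mp haf).2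
    have hsing : φ (some u) = {some v} := by
      obtain ⟨b, hb⟩ := Finset.card_eq_one.mp (h1 u)
      rw [hb, Finset.mem_singleton] at hvu
      rw [hb, ← hvu]
    have hu : φ (some u) ⊆ Finset.univ.image (fun v : V => (some v : Option V)) := by
      rw [hsing]
      intro x hx
      rw [Finset.mem_singleton] at hx
      subst hx
      simp
    refine ⟨⟨u, hu⟩, ?_⟩
    apply Subtype.ext
    have := (hg ⟨u, hu⟩).symm.trans hsing
    exact Option.some_injective _ (Finset.singleton_injective this)
end

section
/- The number of ε-assignments from U to V equals the number of injective maps from subsets of U into V: |𝒜_ε(U,V)| = |ℐ(U,V)|. -/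
/-!
An ε-assignment is determined by the partial map `u ↦ φ(u)` on `U`, which the fibre condition
forces to be injective on its domain: `φ(ε)` must then consist of `ε` together with exactly
the points of `V` outside its range. Conversely every partial injection extends to an
ε-assignment in this way, so the two sets are in bijection.
-/

def IsPartialInjective {U V : Type*} (f : U → Option V) : Prop :=
  ∀ u₁ u₂ v, f u₁ = some v → f u₂ = some v → u₁ = u₂

lemma IsEpsAssignment.existsUnique {U V : Type*} [Fintype U] [DecidableEq U] [DecidableEq V]
    {φ : Option U → Finset (Option V)} (hφ : IsEpsAssignment φ) (v : V) : ∃! x, some v ∈ φ x :=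
  (Fintype.existsUnique_iff_card_one _).mpr (hφ.2.1 v)

section

variable {U V : Type*} [Fintype U] [Fintype V] [DecidableEq V]

def ofPartialFun (f : U → Option V) : Option U → Finset (Option V)
  | none => Finset.univ.filter fun y => y = none ∨ ∀ u, f u ≠ y
  | some u => {f u}

@[simp]
lemma ofPartialFun_some (f : U → Option V) (u : U) : ofPartialFun f (some u) = {f u} := rfl

@[simp]
lemma some_mem_ofPartialFun_none {f : U → Option V} {v : V} :
    some v ∈ ofPartialFun f none ↔ ∀ u, f u ≠ some v := by
  simp [ofPartialFun]

lemma none_mem_ofPartialFun_none (f : U → Option V) : none ∈ ofPartialFun f none := by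
  simp [ofPartialFun]

lemma ofPartialFun_injective : Function.Injective (ofPartialFun : (U → Option V) → _) :=
  fun _ _ h => funext fun u => Finset.singleton_injective (congrFun h (some u))

variable [DecidableEq U]

lemma IsPartialInjective.isEpsAssignment_ofPartialFun {f : U → Option V}
    (hf : IsPartialInjective f) : IsEpsAssignment (ofPartialFun f) := by
  refine ⟨fun u => by simp, fun v => ?_, none_mem_ofPartialFun_none f⟩
  rw [← Fintype.existsUnique_iff_card_one]
  by_cases hv : ∃ u, f u = some v
  · obtain ⟨u, hu⟩ := hv
    refine ⟨some u, by simp [hu], ?_⟩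
    rintro (_ | u') hmem
    · exact absurd hu (some_mem_ofPartialFun_none.mp hmem u)
    · rw [hf u' u v (Finset.mem_singleton.mp hmem).symm hu]
  · push Not at hv
    refine ⟨none, some_mem_ofPartialFun_none.mpr hv, ?_⟩
    rintro (_ | u') hmem
    · rfl
    · exact absurd (Finset.mem_singleton.mp hmem).symm (hv u')

lemma IsEpsAssignment.exists_eq_ofPartialFun {φ : Option U → Finset (Option V)}
    (hφ : IsEpsAssignment φ) : ∃ f, IsPartialInjective f ∧ ofPartialFun f = φ := by
  choose f hf using fun u => Finset.card_eq_one.mp (hφ.1 u)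
  have mem_iff {u : U} {v : V} : some v ∈ φ (some u) ↔ f u = some v := by
    rw [hf, Finset.mem_singleton, eq_comm]
  refine ⟨f, fun u₁ u₂ v h₁ h₂ => ?_, funext ?_⟩
  · exact Option.some_injective _ <|
      (hφ.existsUnique v).unique (mem_iff.mpr h₁) (mem_iff.mpr h₂)
  rintro (_ | u)
  · ext (_ | v)
    · exact iff_of_true (none_mem_ofPartialFun_none f) hφ.2.2
    rw [some_mem_ofPartialFun_none]
    obtain ⟨x, hx, hx_unique⟩ := hφ.existsUnique v
    constructor
    · intro hv
      rcases x with _ | u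
      · exact hx
      · exact absurd (mem_iff.mp hx) (hv u)
    · intro hv u hu
      exact Option.some_ne_none u ((hx_unique _ (mem_iff.mpr hu)).trans
        (hx_unique none hv).symm)
  · simp [hf]

lemma isEpsAssignment_iff {φ : Option U → Finset (Option V)} :
    IsEpsAssignment φ ↔ ∃ f, IsPartialInjective f ∧ ofPartialFun f = φ :=
  ⟨IsEpsAssignment.exists_eq_ofPartialFun,
    fun ⟨_, hf, hφ⟩ => hφ ▸ hf.isEpsAssignment_ofPartialFun⟩

end

/-- `|𝒜_ε(U,V)| = |ℐ(U,V)|`, where `ℐ(U,V)` (the injective maps from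
subsets of `U` into `V`) is encoded as the set of `f : U → Option V` injective on
their domain. -/
theorem card_epsAssignments_eq_card_partialInjections
    {U V : Type*} [Fintype U] [DecidableEq U] [Fintype V] [DecidableEq V] :
    Nat.card {φ : Option U → Finset (Option V) // IsEpsAssignment φ} =
      Nat.card {f : U → Option V // ∀ u₁ u₂ v, f u₁ = some v → f u₂ = some v → u₁ = u₂} := by
  have hrange : {φ : Option U → Finset (Option V) | IsEpsAssignment φ} =
      ofPartialFun '' {f | IsPartialInjective f} :=
    Set.ext fun _ => isEpsAssignment_iff
  rw [← Set.coe_ofPred, hrange, Nat.card_image_of_injective ofPartialFun_injective]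
  rfl
end

section
/- Let C ∈ [0,+∞)^{(n+1)×(m+1)} be a cost matrix, and let X ∈ 𝒮_{n,m,ε} together with dual vectors u ∈ ℝ^{n+1}, v ∈ ℝ^{m+1} satisfying u_{n+1} = v_{m+1} = 0, c_{i,j} ≥ u_i + v_j for all (i,j), and the complementary slackness condition x_{i,j} = 1 ⟹ c_{i,j} = u_i + v_j. Then X is an optimal solution of the LSAPE: for every Y ∈ 𝒮_{n,m,ε}, Σ_{i,j} x_{i,j} c_{i,j} ≤ Σ_{i,j} y_{i,j} c_{i,j}, and the optimal value equals Σ_{i=1}^{n} u_i + Σ_{j=1}^{m} v_j. -/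
/-- The set `𝒮_{n,m,ε}` of binary `(n+1)×(m+1)` matrices (real-valued, with entries
in `{0,1}`) whose `n` first rows and `m` first columns each sum to `1`, and whose
`(n+1,m+1)` entry is `1` (the matrix representations of ε-assignments). -/
def IsEpsAssignMatrix (n m : ℕ) (X : Fin (n + 1) → Fin (m + 1) → ℝ) : Prop :=
  (∀ i j, X i j = 0 ∨ X i j = 1) ∧
  (∀ i : Fin n, ∑ j, X i.castSucc j = 1) ∧
  (∀ j : Fin m, ∑ i, X i j.castSucc = 1) ∧
  X (Fin.last n) (Fin.last m) = 1

lemma eps_dual_sum {n m : ℕ} (Y : Fin (n + 1) → Fin (m + 1) → ℝ)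
    (hY : IsEpsAssignMatrix n m Y)
    (u : Fin (n + 1) → ℝ) (v : Fin (m + 1) → ℝ)
    (hu : u (Fin.last n) = 0) (hv : v (Fin.last m) = 0) :
    ∑ i, ∑ j, Y i j * (u i + v j) =
      (∑ i : Fin n, u i.castSucc) + (∑ j : Fin m, v j.castSucc) := by
  obtain ⟨h01, hrow, hcol, hlast⟩ := hY
  have : ∑ i, ∑ j, Y i j * (u i + v j)
      = (∑ i, u i * ∑ j, Y i j) + (∑ j, v j * ∑ i, Y i j) := by
    simp only [mul_add, Finset.sum_add_distrib, Finset.mul_sum]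
    congr 1
    · exact Finset.sum_congr rfl fun i _ => Finset.sum_congr rfl fun j _ => mul_comm _ _
    · rw [Finset.sum_comm]
      exact Finset.sum_congr rfl fun j _ => Finset.sum_congr rfl fun i _ => mul_comm _ _
  rw [this]
  congr 1
  · rw [Fin.sum_univ_castSucc, hu]
    simp only [zero_mul, add_zero]
    apply Finset.sum_congr rfl
    intro i _
    rw [hrow ⟨i, i.isLt⟩, mul_one]
  · rw [Fin.sum_univ_castSucc, hv]
    simp only [zero_mul, add_zero]
    apply Finset.sum_congr rfl
    intro j _
    rw [hcol ⟨j, j.isLt⟩, mul_one]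

/-- if `X ∈ 𝒮_{n,m,ε}` and dual vectors `u`, `v` (with
`u_{n+1} = v_{m+1} = 0`) satisfy dual feasibility `c_{i,j} ≥ u_i + v_j` and
complementary slackness `x_{i,j} = 1 ⟹ c_{i,j} = u_i + v_j`, then `X` is an optimal
solution of the LSAPE, and the optimal value is `Σ_{i=1}^n u_i + Σ_{j=1}^m v_j`. -/
theorem lsape_optimality_from_complementary_slackness {n m : ℕ}
    (C : Fin (n + 1) → Fin (m + 1) → ℝ) (hC : ∀ i j, 0 ≤ C i j)
    (X : Fin (n + 1) → Fin (m + 1) → ℝ) (hX : IsEpsAssignMatrix n m X)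
    (u : Fin (n + 1) → ℝ) (v : Fin (m + 1) → ℝ)
    (hu : u (Fin.last n) = 0) (hv : v (Fin.last m) = 0)
    (hfeas : ∀ i j, u i + v j ≤ C i j)
    (hcs : ∀ i j, X i j = 1 → C i j = u i + v j) :
    (∀ Y : Fin (n + 1) → Fin (m + 1) → ℝ, IsEpsAssignMatrix n m Y →
      ∑ i, ∑ j, X i j * C i j ≤ ∑ i, ∑ j, Y i j * C i j) ∧
    ∑ i, ∑ j, X i j * C i j =
      (∑ i : Fin n, u i.castSucc) + (∑ j : Fin m, v j.castSucc) := by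
  have hXval : ∑ i, ∑ j, X i j * C i j =
      (∑ i : Fin n, u i.castSucc) + (∑ j : Fin m, v j.castSucc) := by
    rw [← eps_dual_sum X hX u v hu hv]
    apply Finset.sum_congr rfl; intro i _
    apply Finset.sum_congr rfl; intro j _
    rcases hX.1 i j with h | h
    · rw [h, zero_mul, zero_mul]
    · rw [h, one_mul, one_mul, hcs i j h]
  refine ⟨fun Y hY => ?_, hXval⟩
  rw [hXval, ← eps_dual_sum Y hY u v hu hv]
  apply Finset.sum_le_sum; intro i _
  apply Finset.sum_le_sum; intro j _
  have h0 : 0 ≤ Y i j := by rcases hY.1 i j with h | h <;> rw [h] <;> norm_num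
  exact mul_le_mul_of_nonneg_left (hfeas i j) h0
end

section
/- Let C ∈ [0,+∞)^{(n+1)×(m+1)}, let X be a partial ε-assignment matrix, and let u ∈ ℝ^{n+1}, v ∈ ℝ^{m+1} with u_{n+1} = v_{m+1} = 0 be such that c_{i,j} ≥ u_i + v_j for all (i,j) and x_{i,j} = 1 ⟹ c_{i,j} = u_i + v_j. Let LU ⊆ {1,…,n} and SV ⊆ {1,…,m} be nonempty sets such that every assigned pair touching LU ∪ SV lies in LU × SV, i.e. x_{i,j} = 1 with i ∈ LU implies j ∈ SV and x_{i,j} = 1 with j ∈ SV implies i ∈ LU. Let δ = min{ c_{i,j} − u_i − v_j : i ∈ ({1,…,n} \ LU) ∪ {n+1}, j ∈ SV }. Define u'_i = u_i − δ for i ∈ LU and u'_i = u_i otherwise, v'_j = v_j + δ for j ∈ SV and v'_j = v_j otherwise. Then c_{i,j} ≥ u'_i + v'_j for all (i,j), the complementary slackness condition x_{i,j} = 1 ⟹ c_{i,j} = u'_i + v'_j still holds, and there exists at least one pair (i,j) with i ∈ ({1,…,n} \ LU) ∪ {n+1} and j ∈ SV such that c_{i,j} = u'_i + v'_j. -/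
/-- A partial ε-assignment matrix: a binary `(n+1)×(m+1)` matrix (real-valued, with
entries in `{0,1}`) whose `n` first rows and `m` first columns each sum to at most
`1`, and whose `(n+1,m+1)` entry is `1`. -/
def IsPartialEpsAssignMatrix (n m : ℕ) (X : Fin (n + 1) → Fin (m + 1) → ℝ) : Prop :=
  (∀ i j, X i j = 0 ∨ X i j = 1) ∧
  (∀ i : Fin n, ∑ j, X i.castSucc j ≤ 1) ∧
  (∀ j : Fin m, ∑ i, X i j.castSucc ≤ 1) ∧
  X (Fin.last n) (Fin.last m) = 1

set_option maxHeartbeats 1000000 in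
/-- dual update of the Hungarian algorithm for the LSAPE: given a
partial ε-assignment `X`, feasible duals `(u,v)` satisfying complementary slackness,
nonempty sets `LU ⊆ {1,…,n}`, `SV ⊆ {1,…,m}` such that every assigned pair touching
`LU ∪ SV` lies in `LU × SV`, and
`δ = min{c̄_{i,j} : i ∈ ({1,…,n}∖LU) ∪ {n+1}, j ∈ SV}`, the updated duals
(`u'_i = u_i − δ` on `LU`, `v'_j = v_j + δ` on `SV`, unchanged elsewhere) remain
feasible, complementary slackness still holds, and some pair `(i,j)` with
`i ∈ ({1,…,n}∖LU) ∪ {n+1}`, `j ∈ SV` becomes tight: `c_{i,j} = u'_i + v'_j`. -/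
theorem lsape_dual_update {n m : ℕ}
    (C : Fin (n + 1) → Fin (m + 1) → ℝ) (hC : ∀ i j, 0 ≤ C i j)
    (X : Fin (n + 1) → Fin (m + 1) → ℝ) (hX : IsPartialEpsAssignMatrix n m X)
    (u : Fin (n + 1) → ℝ) (v : Fin (m + 1) → ℝ)
    (hu : u (Fin.last n) = 0) (hv : v (Fin.last m) = 0)
    (hfeas : ∀ i j, u i + v j ≤ C i j)
    (hcs : ∀ i j, X i j = 1 → C i j = u i + v j)
    (LU : Finset (Fin n)) (SV : Finset (Fin m))
    (hLU : LU.Nonempty) (hSV : SV.Nonempty)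
    (hassign₁ : ∀ (i : Fin n) (j : Fin (m + 1)),
      i ∈ LU → X i.castSucc j = 1 → ∃ j' ∈ SV, j = Fin.castSucc j')
    (hassign₂ : ∀ (i : Fin (n + 1)) (j : Fin m),
      j ∈ SV → X i j.castSucc = 1 → ∃ i' ∈ LU, i = Fin.castSucc i')
    (δ : ℝ)
    (hδ : δ = ((insert (Fin.last n) ((Finset.univ \ LU).image Fin.castSucc)) ×ˢ
        (SV.image Fin.castSucc)).inf'
        ((Finset.insert_nonempty _ _).product (hSV.image Fin.castSucc))
        (fun p => C p.1 p.2 - u p.1 - v p.2))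
    (u' : Fin (n + 1) → ℝ) (v' : Fin (m + 1) → ℝ)
    (hu'₁ : ∀ i ∈ LU, u' (Fin.castSucc i) = u (Fin.castSucc i) - δ)
    (hu'₂ : ∀ i : Fin n, i ∉ LU → u' (Fin.castSucc i) = u (Fin.castSucc i))
    (hu'₃ : u' (Fin.last n) = u (Fin.last n))
    (hv'₁ : ∀ j ∈ SV, v' (Fin.castSucc j) = v (Fin.castSucc j) + δ)
    (hv'₂ : ∀ j : Fin m, j ∉ SV → v' (Fin.castSucc j) = v (Fin.castSucc j))
    (hv'₃ : v' (Fin.last m) = v (Fin.last m)) :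
    (∀ i j, u' i + v' j ≤ C i j) ∧
    (∀ i j, X i j = 1 → C i j = u' i + v' j) ∧
    (∃ i ∈ insert (Fin.last n) ((Finset.univ \ LU).image Fin.castSucc),
      ∃ j ∈ SV, C i j.castSucc = u' i + v' j.castSucc) := by
  obtain ⟨p, hp, hpe⟩ := Finset.exists_mem_eq_inf'
    ((Finset.insert_nonempty (Fin.last n) ((Finset.univ \ LU).image Fin.castSucc)).product
      (hSV.image Fin.castSucc))
    (fun p => C p.1 p.2 - u p.1 - v p.2)
  have hδval : δ = C p.1 p.2 - u p.1 - v p.2 := by rw [hδ, hpe]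
  have hδ0 : 0 ≤ δ := by have := hfeas p.1 p.2; linarith
  have hδle : ∀ i ∈ insert (Fin.last n) ((Finset.univ \ LU).image Fin.castSucc),
      ∀ j ∈ SV, δ ≤ C i j.castSucc - u i - v j.castSucc := by
    intro i hi j hj
    rw [hδ]
    exact Finset.inf'_le (b := (i, j.castSucc)) (fun p => C p.1 p.2 - u p.1 - v p.2) (Finset.mem_product.2 ⟨hi, Finset.mem_image_of_mem Fin.castSucc hj⟩)
  refine ⟨?_, ?_, ?_⟩
  · intro i j
    induction i using Fin.lastCases with
    | last =>
      rw [hu'₃]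
      induction j using Fin.lastCases with
      | last => rw [hv'₃]; exact hfeas _ _
      | cast j =>
        by_cases hj : j ∈ SV
        · rw [hv'₁ j hj]
          have := hδle (Fin.last n) (Finset.mem_insert_self _ _) j hj
          linarith
        · rw [hv'₂ j hj]; exact hfeas _ _
    | cast i =>
      by_cases hi : i ∈ LU
      · rw [hu'₁ i hi]
        induction j using Fin.lastCases with
        | last => rw [hv'₃]; have := hfeas i.castSucc (Fin.last m); linarith
        | cast j =>
          by_cases hj : j ∈ SV
          · rw [hv'₁ j hj]; have := hfeas i.castSucc j.castSucc; linarith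
          · rw [hv'₂ j hj]; have := hfeas i.castSucc j.castSucc; linarith
      · rw [hu'₂ i hi]
        have hmem : i.castSucc ∈ insert (Fin.last n) ((Finset.univ \ LU).image Fin.castSucc) :=
          Finset.mem_insert_of_mem
            (Finset.mem_image_of_mem _ (Finset.mem_sdiff.2 ⟨Finset.mem_univ _, hi⟩))
        induction j using Fin.lastCases with
        | last => rw [hv'₃]; exact hfeas _ _
        | cast j =>
          by_cases hj : j ∈ SV
          · rw [hv'₁ j hj]
            have := hδle i.castSucc hmem j hj
            linarith
          · rw [hv'₂ j hj]; exact hfeas _ _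
  · intro i j hij
    induction i using Fin.lastCases with
    | last =>
      rw [hu'₃]
      induction j using Fin.lastCases with
      | last => rw [hv'₃]; exact hcs _ _ hij
      | cast j =>
        have hj : j ∉ SV := by
          intro hj
          obtain ⟨i', hi', heq⟩ := hassign₂ (Fin.last n) j hj hij
          exact (Fin.castSucc_lt_last i').ne' heq
        rw [hv'₂ j hj]; exact hcs _ _ hij
    | cast i =>
      by_cases hi : i ∈ LU
      · obtain ⟨j', hj', rfl⟩ := hassign₁ i j hi hij
        rw [hu'₁ i hi, hv'₁ j' hj']
        have := hcs _ _ hij; linarith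
      · rw [hu'₂ i hi]
        induction j using Fin.lastCases with
        | last => rw [hv'₃]; exact hcs _ _ hij
        | cast j =>
          have hj : j ∉ SV := by
            intro hj
            obtain ⟨i', hi', heq⟩ := hassign₂ i.castSucc j hj hij
            exact hi ((Fin.castSucc_injective _ heq) ▸ hi')
          rw [hv'₂ j hj]; exact hcs _ _ hij
  · obtain ⟨hp1, hp2⟩ := Finset.mem_product.1 hp
    obtain ⟨j, hj, hje⟩ := Finset.mem_image.1 hp2
    have hu'p : u' p.1 = u p.1 := by
      rcases Finset.mem_insert.1 hp1 with h | h
      · rw [h, hu'₃]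
      · obtain ⟨i, hi, hie⟩ := Finset.mem_image.1 h
        rw [← hie]; exact hu'₂ i (Finset.mem_sdiff.1 hi).2
    refine ⟨p.1, hp1, j, hj, ?_⟩
    rw [← hje] at hδval
    rw [hu'p, hv'₁ j hj]
    linarith
end
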